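/- arXiv:1710.03523 — 4 statements merged into one kernel-verified Lean document; each statement's English description precedes it below -/
import Mathlib

section
/- Let 2 ≤ e ≤ m be integers. For every numerical semigroup S with multiplicity m and embedding dimension e, the numerical semigroup φ(S) generated by {m + (x mod m) : x ∈ msg(S)} is a packed numerical semigroup with multiplicity m and embedding dimension e; moreover φ(S) = S whenever S is packed, so φ defines a surjective map from L(m,e) onto C(m,e). -/
open scoped Pointwise

/-- A numerical semigroup: an additive submonoid of ℕ with finite complement. -/
def IsNumericalSemigroup (S : Set ℕ) : Prop :=
  0 ∈ S ∧ (∀ a ∈ S, ∀ b ∈ S, a + b ∈ S) ∧ Sᶜ.Finite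

/-- Multiplicity: the least positive element. -/
noncomputable def mult (S : Set ℕ) : ℕ := sInf (S \ {0})

/-- Minimal system of generators: (S∖{0}) ∖ ((S∖{0})+(S∖{0})). -/
def msg (S : Set ℕ) : Set ℕ := (S \ {0}) \ ((S \ {0}) + (S \ {0}))

/-- Embedding dimension: cardinality of the minimal system of generators. -/
noncomputable def edim (S : Set ℕ) : ℕ := (msg S).ncard

/-- The submonoid of (ℕ,+) generated by a set, as a set. -/
def genSet (B : Set ℕ) : Set ℕ := (AddSubmonoid.closure B : Set ℕ)

/-- Packed numerical semigroup: msg(S) ⊆ {m(S),…,2m(S)−1}. -/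
def IsPacked (S : Set ℕ) : Prop := msg S ⊆ Set.Icc (mult S) (2 * mult S - 1)

/-- L(m,e): numerical semigroups with multiplicity m and embedding dimension e. -/
def Lset (m e : ℕ) : Set (Set ℕ) :=
  {S | IsNumericalSemigroup S ∧ mult S = m ∧ edim S = e}

/-- C(m,e): packed numerical semigroups in L(m,e). -/
def Cset (m e : ℕ) : Set (Set ℕ) := {S ∈ Lset m e | IsPacked S}

/-- φ(S): the monoid generated by {m + (x mod m) : x ∈ msg(S)}, m = mult S. -/
noncomputable def phi (S : Set ℕ) : Set ℕ :=
  genSet ((fun x => mult S + x % mult S) '' msg S)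

/-- The class [S] = {T ∈ L(m,e) : φ(T) = φ(S)}. -/
def classOf (m e : ℕ) (S : Set ℕ) : Set (Set ℕ) := {T ∈ Lset m e | phi T = phi S}

/-- Frobenius number: the largest element of the complement. -/
noncomputable def Frob (S : Set ℕ) : ℕ := sSup Sᶜ

/-- Genus: the cardinality of the complement. -/
noncomputable def genus (S : Set ℕ) : ℕ := Sᶜ.ncard

/-- The Apéry set of n in S. -/
def Ap (S : Set ℕ) (n : ℕ) : Set ℕ := {s ∈ S | ¬ ∃ t ∈ S, s = t + n}

/-- Minimal elements of a set in a partial order. -/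
def minimalsOf {β : Type*} [PartialOrder β] (X : Set β) : Set β :=
  {x ∈ X | ∀ y ∈ X, y ≤ x → y = x}

/-!
Write `m = mult S`. The residues `m + x % m` lie in `[m, 2m - 1]`, and a set of generators in that
window is exactly the minimal generating system of the monoid it generates, since a sum of two
nonzero elements is already `≥ 2m`. On `msg S` the residue map is injective: two minimal generators
`x < y` with `x ≡ y [MOD m]` would give `y = x + k m` with `k m ∈ S`. Finally each `x ∈ msg S` is
`(m + x % m) + (x / m - 1) m ∈ φ(S)`, so `S ⊆ φ(S)` and `φ(S)` has finite complement.
-/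

lemma mult_le_of_mem {S : Set ℕ} {s : ℕ} (hs : s ∈ S) (h0 : s ≠ 0) : mult S ≤ s :=
  Nat.sInf_le ⟨hs, h0⟩

lemma add_mod_mem_Icc {m : ℕ} (hm : m ≠ 0) (x : ℕ) : m + x % m ∈ Set.Icc m (2 * m - 1) := by
  have := Nat.mod_lt x (Nat.pos_of_ne_zero hm)
  constructor <;> omega

lemma add_mod_eq_self {m x : ℕ} (hm : m ≠ 0) (hx : x ∈ Set.Icc m (2 * m - 1)) :
    m + x % m = x := by
  obtain ⟨hmx, hx2m⟩ := hx
  rw [Nat.mod_eq_sub_mod hmx, Nat.mod_eq_of_lt (by omega)]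
  omega

section genSet

variable {m : ℕ} {B : Set ℕ}

lemma eq_zero_or_le_of_mem_genSet (hB : ∀ b ∈ B, m ≤ b) {t : ℕ} (ht : t ∈ genSet B) :
    t = 0 ∨ m ≤ t :=
  AddSubmonoid.closure_induction (fun b hb => Or.inr (hB b hb)) (Or.inl rfl)
    (fun _ _ _ _ _ _ => by omega) ht

lemma mult_genSet (hm : m ≠ 0) (hmB : m ∈ B) (hB : ∀ b ∈ B, m ≤ b) : mult (genSet B) = m := by
  refine le_antisymm (mult_le_of_mem (AddSubmonoid.subset_closure hmB) hm) ?_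
  refine le_csInf ⟨m, AddSubmonoid.subset_closure hmB, hm⟩ ?_
  rintro t ⟨ht, ht0⟩
  exact (eq_zero_or_le_of_mem_genSet hB ht).resolve_left ht0

lemma msg_genSet_subset : msg (genSet B) ⊆ B := by
  suffices h : ∀ t ∈ genSet B, t = 0 ∨ t ∈ B ∨ t ∈ (genSet B \ {0}) + (genSet B \ {0}) by
    rintro t ⟨⟨ht, ht0⟩, hdec⟩
    exact ((h t ht).resolve_left ht0).resolve_right hdec
  intro t ht
  induction ht using AddSubmonoid.closure_induction with
  | mem b hb => exact Or.inr (Or.inl hb)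
  | zero => exact Or.inl rfl
  | add x y hx hy ihx ihy =>
    rcases eq_or_ne x 0 with rfl | hx0
    · simpa using ihy
    rcases eq_or_ne y 0 with rfl | hy0
    · simpa using ihx
    exact Or.inr (Or.inr (Set.add_mem_add ⟨hx, hx0⟩ ⟨hy, hy0⟩))

lemma msg_genSet (hm : m ≠ 0) (hB : B ⊆ Set.Icc m (2 * m - 1)) : msg (genSet B) = B := by
  have hle : ∀ b ∈ B, m ≤ b := fun b hb => (hB hb).1
  refine msg_genSet_subset.antisymm fun b hb => ⟨⟨AddSubmonoid.subset_closure hb, ?_⟩, ?_⟩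
  · have := hle b hb
    simp only [Set.mem_singleton_iff]
    omega
  · intro hsum
    obtain ⟨u, ⟨hu, hu0⟩, v, ⟨hv, hv0⟩, rfl⟩ := Set.mem_add.1 hsum
    have := (hB hb).2
    have := (eq_zero_or_le_of_mem_genSet hle hu).resolve_left hu0
    have := (eq_zero_or_le_of_mem_genSet hle hv).resolve_left hv0
    omega

end genSet

namespace IsNumericalSemigroup

variable {S : Set ℕ}

lemma mult_mem (hS : IsNumericalSemigroup S) : mult S ∈ S \ {0} := by
  have hinf : S.Infinite := by simpa using hS.2.2.infinite_compl
  exact Nat.sInf_mem (hinf.sdiff (Set.finite_singleton 0)).nonempty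

lemma mult_ne_zero (hS : IsNumericalSemigroup S) : mult S ≠ 0 :=
  hS.mult_mem.2

lemma mult_mem_msg (hS : IsNumericalSemigroup S) : mult S ∈ msg S := by
  refine ⟨hS.mult_mem, ?_⟩
  intro hsum
  obtain ⟨a, ⟨ha, ha0⟩, b, ⟨hb, hb0⟩, hab⟩ := Set.mem_add.1 hsum
  have := mult_le_of_mem ha ha0
  have := mult_le_of_mem hb hb0
  have := hS.mult_ne_zero
  omega

lemma genSet_msg (hS : IsNumericalSemigroup S) : genSet (msg S) = S := by
  refine subset_antisymm (fun s hs => AddSubmonoid.closure_induction (fun x hx => hx.1.1) hS.1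
    (fun x y _ _ hx hy => hS.2.1 x hx y hy) hs) fun s hs => ?_
  induction s using Nat.strong_induction_on with
  | _ s ih =>
    by_cases hmsg : s ∈ msg S
    · exact AddSubmonoid.subset_closure hmsg
    rcases eq_or_ne s 0 with rfl | h0
    · exact zero_mem _
    obtain ⟨a, ⟨ha, ha0⟩, b, ⟨hb, hb0⟩, rfl⟩ :=
      Set.mem_add.1 (not_not.1 fun hc => hmsg ⟨⟨hs, h0⟩, hc⟩)
    have ha0 : a ≠ 0 := ha0
    have hb0 : b ≠ 0 := hb0
    exact add_mem (ih a (by omega) ha) (ih b (by omega) hb)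

lemma injOn_add_mod_msg (hS : IsNumericalSemigroup S) :
    Set.InjOn (fun x => mult S + x % mult S) (msg S) := by
  intro x hx y hy hxy
  wlog hle : x ≤ y generalizing x y
  · exact (this hy hx hxy.symm (le_of_not_ge hle)).symm
  obtain ⟨k, hk⟩ := (Nat.modEq_iff_dvd' hle).1 (Nat.add_left_cancel hxy)
  rcases eq_or_ne k 0 with rfl | hk0
  · omega
  have hkm : k * mult S ∈ genSet (msg S) :=
    nsmul_mem (AddSubmonoid.subset_closure hS.mult_mem_msg) k
  rw [hS.genSet_msg] at hkm
  have hkm0 : k * mult S ∈ S \ {0} := ⟨hkm, Nat.mul_ne_zero hk0 hS.mult_ne_zero⟩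
  exact (hy.2 (Set.mem_add.2 ⟨x, hx.1, _, hkm0, by rw [Nat.mul_comm]; omega⟩)).elim

lemma subset_phi (hS : IsNumericalSemigroup S) : S ⊆ phi S := by
  have hm : 0 < mult S := Nat.pos_of_ne_zero hS.mult_ne_zero
  have hmB : mult S ∈ phi S := AddSubmonoid.subset_closure ⟨mult S, hS.mult_mem_msg, by simp⟩
  have hmsg : msg S ⊆ phi S := fun x hx => by
    have hq : 0 < x / mult S := Nat.div_pos (mult_le_of_mem hx.1.1 hx.1.2) hm
    have hx_eq : x = (mult S + x % mult S) + (x / mult S - 1) • mult S := by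
      have := Nat.div_add_mod' x (mult S)
      have := Nat.le_mul_of_pos_left (mult S) hq
      rw [smul_eq_mul, Nat.sub_mul, one_mul]
      omega
    rw [hx_eq]
    exact add_mem (AddSubmonoid.subset_closure ⟨x, hx, rfl⟩) (nsmul_mem hmB _)
  calc S = genSet (msg S) := hS.genSet_msg.symm
    _ ⊆ phi S := AddSubmonoid.closure_le.2 hmsg

end IsNumericalSemigroup

variable {S : Set ℕ}

lemma isNumericalSemigroup_phi (hS : IsNumericalSemigroup S) : IsNumericalSemigroup (phi S) :=
  ⟨zero_mem _, fun _ ha _ hb => add_mem ha hb,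
    hS.2.2.subset (Set.compl_subset_compl.2 hS.subset_phi)⟩

lemma mult_phi (hS : IsNumericalSemigroup S) : mult (phi S) = mult S :=
  mult_genSet hS.mult_ne_zero ⟨mult S, hS.mult_mem_msg, by simp⟩
    (by rintro _ ⟨x, -, rfl⟩; exact Nat.le_add_right _ _)

lemma msg_phi (hS : IsNumericalSemigroup S) :
    msg (phi S) = (fun x => mult S + x % mult S) '' msg S :=
  msg_genSet hS.mult_ne_zero (by rintro _ ⟨x, -, rfl⟩; exact add_mod_mem_Icc hS.mult_ne_zero x)

lemma edim_phi (hS : IsNumericalSemigroup S) : edim (phi S) = edim S := by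
  unfold edim
  rw [msg_phi hS, hS.injOn_add_mod_msg.ncard_image]

lemma isPacked_phi (hS : IsNumericalSemigroup S) : IsPacked (phi S) := by
  rw [IsPacked, msg_phi hS, mult_phi hS]
  rintro _ ⟨x, -, rfl⟩
  exact add_mod_mem_Icc hS.mult_ne_zero x

lemma phi_eq_self_of_isPacked (hS : IsNumericalSemigroup S) (hp : IsPacked S) : phi S = S := by
  have hfix : (fun x => mult S + x % mult S) '' msg S = msg S :=
    Set.EqOn.image_eq_self fun x hx => add_mod_eq_self hS.mult_ne_zero (hp hx)
  rw [phi, hfix, hS.genSet_msg]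

theorem stmt0_general (m e : ℕ) :
    (∀ S ∈ Lset m e, phi S ∈ Cset m e) ∧
    (∀ S ∈ Lset m e, IsPacked S → phi S = S) ∧
    (∀ T ∈ Cset m e, ∃ S ∈ Lset m e, phi S = T) := by
  refine ⟨?_, fun S hS hp => phi_eq_self_of_isPacked hS.1 hp,
    fun T hT => ⟨T, hT.1, phi_eq_self_of_isPacked hT.1.1 hT.2⟩⟩
  rintro S ⟨hS, rfl, rfl⟩
  exact ⟨⟨isNumericalSemigroup_phi hS, mult_phi hS, edim_phi hS⟩, isPacked_phi hS⟩

/-- φ maps L(m,e) into C(m,e), fixes packed semigroups,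
and is surjective onto C(m,e). -/
theorem stmt0 (m e : ℕ) (h2 : 2 ≤ e) (hem : e ≤ m) :
    (∀ S ∈ Lset m e, phi S ∈ Cset m e) ∧
    (∀ S ∈ Lset m e, IsPacked S → phi S = S) ∧
    (∀ T ∈ Cset m e, ∃ S ∈ Lset m e, phi S = T) :=
  stmt0_general m e
end

section
/- Let 2 ≤ e ≤ m be integers, let S ∈ C(m,e), let P ∈ [S], and write msg(P) = {n₁ < n₂ < ⋯ < n_e} (so n₁ = m). Then a numerical semigroup H is a child of P in the graph G([S]) (i.e. H ∈ [S] and msg(P) = (msg(H) ∖ {M(H)}) ∪ {M(H) − m}, where M(H) = max msg(H)) if and only if there exists k ∈ {2, …, e} with n_k + n₁ > n_e and n_k + n₁ ∉ ⟨{n₁,…,n_e} ∖ {n_k}⟩ such that H = ⟨({n₁,…,n_e} ∖ {n_k}) ∪ {n_k + n₁}⟩; moreover for such H one has msg(H) = ({n₁,…,n_e} ∖ {n_k}) ∪ {n_k + n₁}. -/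
open scoped Pointwise

/-!
Write `m` for the multiplicity. If `msg P = msg H \ {M} ∪ {M - m}` with `M` the largest minimal
generator of `H`, then `g = M - m` is a new generator (otherwise `P` would have fewer generators
than `H`), so `H` arises from `P` by trading `g` for `g + m`; `g + m` exceeds all generators of `P`
and is not generated by the others since it is minimal in `H`, and `g ≠ m` since `2m` is never a
minimal generator. Conversely, if `g + m` exceeds every generator of `P` and is not generated by
the others, the exchanged set is minimal: a generator `x < g + m` generated by the rest would be
generated without `g + m`, hence by `msg P \ {x}`. The exchange keeps the multiplicity, the
embedding dimension and all residues mod `m`, hence `φ`.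
-/

section Generators

variable {S B : Set ℕ}

theorem genSet_mono {A B : Set ℕ} (h : A ⊆ B) : genSet A ⊆ genSet B :=
  AddSubmonoid.closure_mono h

theorem genSet_subset (hS : IsNumericalSemigroup S) (hB : B ⊆ S) : genSet B ⊆ S := fun _ hx =>
  AddSubmonoid.closure_induction (fun _ h => hB h) hS.1 (fun _ _ _ _ hx hy => hS.2.1 _ hx _ hy) hx

theorem mem_genSet_sdiff_singleton_or_le {x : ℕ} (b : ℕ) (hx : x ∈ genSet B) :
    x ∈ genSet (B \ {b}) ∨ b ≤ x := by
  induction hx using AddSubmonoid.closure_induction with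
  | mem c hc =>
    by_cases h : c = b
    · exact .inr h.ge
    · exact .inl (AddSubmonoid.subset_closure ⟨hc, h⟩)
  | zero => exact .inl (AddSubmonoid.zero_mem _)
  | add x y _ _ hx hy =>
    rcases hx with hx | hx
    · rcases hy with hy | hy
      · exact .inl (AddSubmonoid.add_mem _ hx hy)
      · exact .inr (le_add_left hy)
    · exact .inr (le_add_right hx)

theorem mem_genSet_sdiff_singleton_of_lt {x b : ℕ} (hx : x ∈ genSet B) (hxb : x < b) :
    x ∈ genSet (B \ {b}) :=
  (mem_genSet_sdiff_singleton_or_le b hx).resolve_right hxb.not_ge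

theorem mem_genSet_cases {x : ℕ} (hx : x ∈ genSet B) :
    x = 0 ∨ x ∈ B ∨ x ∈ (genSet B \ {0}) + (genSet B \ {0}) := by
  induction hx using AddSubmonoid.closure_induction with
  | mem c hc => exact .inr (.inl hc)
  | zero => exact .inl rfl
  | add x y hx hy ihx ihy =>
    by_cases hx0 : x = 0
    · simpa [hx0] using ihy
    by_cases hy0 : y = 0
    · simpa [hy0] using ihx
    exact .inr (.inr (Set.mem_add.2 ⟨x, ⟨hx, hx0⟩, y, ⟨hy, hy0⟩, rfl⟩))

theorem genSet_msg (hS : IsNumericalSemigroup S) : genSet (msg S) = S := by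
  refine (genSet_subset hS fun _ hx => hx.1.1).antisymm fun x hx => ?_
  induction x using Nat.strong_induction_on with
  | _ x ih =>
    rcases eq_or_ne x 0 with rfl | hx0
    · exact AddSubmonoid.zero_mem _
    by_cases hxmsg : x ∈ msg S
    · exact AddSubmonoid.subset_closure hxmsg
    obtain ⟨a, ha, b, hb, rfl⟩ := Set.mem_add.1 (not_not.1 fun h => hxmsg ⟨⟨hx, hx0⟩, h⟩)
    have ha0 : a ≠ 0 := ha.2
    have hb0 : b ≠ 0 := hb.2
    exact AddSubmonoid.add_mem _ (ih a (by omega) ha.1) (ih b (by omega) hb.1)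

theorem notMem_genSet_msg_sdiff_singleton (hS : IsNumericalSemigroup S) {g : ℕ}
    (hg : g ∈ msg S) : g ∉ genSet (msg S \ {g}) := by
  intro h
  rcases mem_genSet_cases h with h0 | ⟨-, hne⟩ | hsum
  · exact hg.1.2 h0
  · exact hne rfl
  · have hsub : genSet (msg S \ {g}) ⊆ S := genSet_subset hS fun _ hx => hx.1.1.1
    exact hg.2 (Set.add_subset_add (Set.sdiff_subset_sdiff_left hsub)
      (Set.sdiff_subset_sdiff_left hsub) hsum)

theorem msg_genSet_of_forall_notMem (hmin : ∀ b ∈ B, b ∉ genSet (B \ {b})) :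
    msg (genSet B) = B := by
  refine subset_antisymm (fun x hx => ?_) fun b hb => ?_
  · obtain ⟨⟨hx, hx0⟩, hdec⟩ := hx
    exact ((mem_genSet_cases hx).resolve_left hx0).resolve_right hdec
  have hb0 : b ≠ 0 := by
    rintro rfl
    exact hmin 0 hb (AddSubmonoid.zero_mem _)
  refine ⟨⟨AddSubmonoid.subset_closure hb, hb0⟩, fun hdec => hmin b hb ?_⟩
  obtain ⟨s, ⟨hs, hs0⟩, t, ⟨ht, ht0⟩, rfl⟩ := Set.mem_add.1 hdec
  have hs0 : s ≠ 0 := hs0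
  have ht0 : t ≠ 0 := ht0
  exact AddSubmonoid.add_mem _ (mem_genSet_sdiff_singleton_of_lt hs (by omega))
    (mem_genSet_sdiff_singleton_of_lt ht (by omega))

end Generators

section Multiplicity

variable {S : Set ℕ}

theorem mult_le {x : ℕ} (hx : x ∈ S) (hx0 : x ≠ 0) : mult S ≤ x :=
  Nat.sInf_le ⟨hx, hx0⟩

theorem mult_le_of_mem_msg {x : ℕ} (hx : x ∈ msg S) : mult S ≤ x :=
  mult_le hx.1.1 hx.1.2

theorem mult_mem (hS : IsNumericalSemigroup S) : mult S ∈ S \ {0} :=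
  Nat.sInf_mem ((hS.2.2.infinite_compl.mono (by simp)).sdiff (Set.finite_singleton 0)).nonempty

theorem mult_pos (hS : IsNumericalSemigroup S) : 0 < mult S :=
  Nat.pos_of_ne_zero (mult_mem hS).2

theorem mult_mem_msg (hS : IsNumericalSemigroup S) : mult S ∈ msg S := by
  refine ⟨mult_mem hS, fun hdec => ?_⟩
  obtain ⟨a, ha, b, hb, hab⟩ := Set.mem_add.1 hdec
  have := mult_le ha.1 ha.2
  have := mult_le hb.1 hb.2
  have : a ≠ 0 := ha.2
  omega

theorem mult_eq_of_mem_msg (hS : IsNumericalSemigroup S) {a : ℕ} (ha : a ∈ msg S)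
    (hle : ∀ x ∈ msg S, a ≤ x) : mult S = a :=
  (mult_le_of_mem_msg ha).antisymm (hle _ (mult_mem_msg hS))

end Multiplicity

section Children

variable {P H : Set ℕ}

theorem msg_genSet_msg_sdiff_union (hP : IsNumericalSemigroup P) {g a : ℕ}
    (hlt : ∀ x ∈ msg P \ {g}, x < a) (ha : a ∉ genSet (msg P \ {g})) :
    msg (genSet (msg P \ {g} ∪ {a})) = msg P \ {g} ∪ {a} := by
  refine msg_genSet_of_forall_notMem fun b hb hgen => ?_
  rcases hb with hb | rfl
  · refine notMem_genSet_msg_sdiff_singleton hP hb.1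
      (genSet_mono ?_ (mem_genSet_sdiff_singleton_of_lt hgen (hlt b hb)))
    rintro x ⟨⟨hx | hx, hxb⟩, hxa⟩
    exacts [⟨hx.1, hxb⟩, absurd hx hxa]
  · exact ha (genSet_mono (fun x hx => hx.1.resolve_right hx.2) hgen)

theorem eq_sdiff_sSup_union {G : Set ℕ} {g m : ℕ} (hg : g ∈ G) (hlt : ∀ x ∈ G, x < g + m) :
    G = (G \ {g} ∪ {g + m}) \ {sSup (G \ {g} ∪ {g + m})} ∪ {sSup (G \ {g} ∪ {g + m}) - m} := by
  have hmax : sSup (G \ {g} ∪ {g + m}) = g + m := by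
    refine IsGreatest.csSup_eq ⟨.inr rfl, ?_⟩
    rintro x (hx | rfl)
    exacts [(hlt x hx.1).le, le_rfl]
  rw [hmax, Set.union_sdiff_right, Nat.add_sub_cancel,
    Set.sdiff_singleton_eq_self fun h => (hlt _ h.1).ne rfl,
    Set.sdiff_union_of_subset (Set.singleton_subset_iff.2 hg)]

theorem mem_classOf_of_msg_eq {m e : ℕ} {S : Set ℕ} (hP : P ∈ classOf m e S)
    (hH : IsNumericalSemigroup H) {g : ℕ} (hg : g ∈ msg P) (hgm : g ≠ m)
    (hnot : g + m ∉ genSet (msg P \ {g})) (hHmsg : msg H = msg P \ {g} ∪ {g + m}) :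
    H ∈ classOf m e S := by
  obtain ⟨⟨hPns, rfl, hPe⟩, hphi⟩ := hP
  have hmult : mult H = mult P := by
    refine mult_eq_of_mem_msg hH (hHmsg ▸ .inl ⟨mult_mem_msg hPns, hgm.symm⟩) ?_
    rw [hHmsg]
    rintro x (hx | rfl)
    exacts [mult_le_of_mem_msg hx.1, le_add_self]
  have hnotMem : g + mult P ∉ msg P := fun h =>
    hnot (AddSubmonoid.subset_closure ⟨h, by simpa using (mult_pos hPns).ne'⟩)
  refine ⟨⟨hH, hmult, ?_⟩, Eq.trans ?_ hphi⟩
  · rw [← hPe, edim, edim, hHmsg, Set.union_singleton, Set.ncard_exchange hnotMem hg]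
  · rw [phi, phi, hmult, hHmsg, Set.image_union, Set.image_singleton, Nat.add_mod_right]
    conv_rhs => rw [← Set.sdiff_union_of_subset (Set.singleton_subset_iff.2 hg), Set.image_union,
      Set.image_singleton]

theorem exists_msg_eq_of_child (hH : IsNumericalSemigroup H) (hfin : (msg H).Finite)
    (hedim : edim P = edim H)
    (hchild : msg P = msg H \ {sSup (msg H)} ∪ {sSup (msg H) - mult H}) :
    ∃ g ∈ msg P, g ≠ mult H ∧ (∀ x ∈ msg P, x < g + mult H) ∧
      g + mult H ∉ genSet (msg P \ {g}) ∧ msg H = msg P \ {g} ∪ {g + mult H} := by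
  set M := sSup (msg H)
  set m := mult H
  have hM : M ∈ msg H := Nat.sSup_mem ⟨_, mult_mem_msg hH⟩ hfin.bddAbove
  have hMg : M = (M - m) + m := (Nat.sub_add_cancel (mult_le_of_mem_msg hM)).symm
  set g := M - m
  have hg : g ∈ msg P := hchild ▸ .inr rfl
  have hgH : g ∉ msg H \ {M} := by
    intro h
    have hPH : msg P = msg H \ {M} := by
      rw [hchild, Set.union_eq_left.2 (Set.singleton_subset_iff.2 h)]
    have := Set.ncard_sdiff_singleton_of_mem hM
    have := Set.ncard_pos hfin |>.2 ⟨M, hM⟩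
    rw [edim, edim, hPH] at hedim
    omega
  have hrest : msg P \ {g} = msg H \ {M} := by
    rw [hchild, Set.union_sdiff_right, Set.sdiff_singleton_eq_self hgH]
  refine ⟨g, hg, fun hgm => ?_, fun x hx => ?_, ?_, ?_⟩
  · exact hM.2 (Set.mem_add.2 ⟨m, mult_mem hH, m, mult_mem hH, by omega⟩)
  · by_cases hxg : x = g
    · have := mult_pos hH
      omega
    · have hx' : x ∈ msg H \ {M} := hrest ▸ ⟨hx, hxg⟩
      have := le_csSup hfin.bddAbove hx'.1
      have : x ≠ M := hx'.2
      omega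
  · rw [hrest, ← hMg]
    exact notMem_genSet_msg_sdiff_singleton hH hM
  · rw [hrest, ← hMg, Set.sdiff_union_of_subset (Set.singleton_subset_iff.2 hM)]

end Children

theorem apply_zero_eq_mult_of_msg_eq_range {P : Set ℕ} (hP : IsNumericalSemigroup P) {e : ℕ}
    {n : Fin e → ℕ} (hn : Monotone n) (hmsg : msg P = Set.range n) (he : 0 < e) :
    n ⟨0, he⟩ = mult P := by
  obtain ⟨j, hj⟩ : mult P ∈ Set.range n := hmsg ▸ mult_mem_msg hP
  have hle : (⟨0, he⟩ : Fin e) ≤ j := Nat.zero_le _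
  exact (hj ▸ hn hle).antisymm (mult_le_of_mem_msg (hmsg ▸ Set.mem_range_self _))

theorem Monotone.forall_mem_range_lt_iff {e : ℕ} {n : Fin e → ℕ} (hn : Monotone n)
    (he : e - 1 < e) {a : ℕ} : (∀ x ∈ Set.range n, x < a) ↔ n ⟨e - 1, he⟩ < a := by
  rw [Set.forall_mem_range]
  exact ⟨fun h => h _, fun h j => (hn (Fin.mk_le_mk.2 (by omega) : j ≤ ⟨e - 1, he⟩)).trans_lt h⟩

/-- Theorem 9: characterization of the children of P in G([S]).
H is a child of P (i.e. H ∈ [S] and msg(P) = (msg(H) ∖ {M(H)}) ∪ {M(H) − m},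
with M(H) = sSup (msg H)) iff H = ⟨({n₁,…,n_e}∖{n_k}) ∪ {n_k + n₁}⟩ for some
k ∈ {2,…,e} with n_k + n₁ > n_e and n_k + n₁ ∉ ⟨{n₁,…,n_e}∖{n_k}⟩; moreover,
for such k the displayed set is the minimal system of generators of that child. -/
theorem stmt7 (m e : ℕ) (h2 : 2 ≤ e) (S : Set ℕ)
    (P : Set ℕ) (hP : P ∈ classOf m e S)
    (n : Fin e → ℕ) (hmono : StrictMono n) (hmsg : msg P = Set.range n)
    (H : Set ℕ) (hH : IsNumericalSemigroup H) :
    ((H ∈ classOf m e S ∧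
        msg P = (msg H \ {sSup (msg H)}) ∪ {sSup (msg H) - m}) ↔
      (∃ k : Fin e, k.val ≠ 0 ∧
        n k + n ⟨0, by omega⟩ > n ⟨e - 1, by omega⟩ ∧
        n k + n ⟨0, by omega⟩ ∉ genSet (Set.range n \ {n k}) ∧
        H = genSet ((Set.range n \ {n k}) ∪ {n k + n ⟨0, by omega⟩}))) ∧
    (∀ k : Fin e, k.val ≠ 0 →
        n k + n ⟨0, by omega⟩ > n ⟨e - 1, by omega⟩ →
        n k + n ⟨0, by omega⟩ ∉ genSet (Set.range n \ {n k}) →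
        msg (genSet ((Set.range n \ {n k}) ∪ {n k + n ⟨0, by omega⟩})) =
          (Set.range n \ {n k}) ∪ {n k + n ⟨0, by omega⟩}) := by
  have hPns := hP.1.1
  have hn0 : n ⟨0, by omega⟩ = m :=
    hP.1.2.1 ▸ apply_zero_eq_mult_of_msg_eq_range hPns hmono.monotone hmsg _
  have hk0 (k : Fin e) : k.val ≠ 0 ↔ n k ≠ m := by
    rw [← hn0, hmono.injective.ne_iff, Ne, Ne, Fin.ext_iff]
  have hlast (a : ℕ) : (∀ x ∈ msg P, x < a) ↔ n ⟨e - 1, by omega⟩ < a :=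
    hmsg ▸ hmono.monotone.forall_mem_range_lt_iff _
  have hchild (k : Fin e) (hbig : n ⟨e - 1, by omega⟩ < n k + m)
      (hnot : n k + m ∉ genSet (msg P \ {n k})) :
      msg (genSet (msg P \ {n k} ∪ {n k + m})) = msg P \ {n k} ∪ {n k + m} :=
    msg_genSet_msg_sdiff_union hPns (fun x hx => (hlast _).2 hbig x hx.1) hnot
  simp only [hn0, ← hmsg, gt_iff_lt]
  refine ⟨⟨fun ⟨hHcl, hHchild⟩ => ?_, fun ⟨k, hk, hbig, hnot, hHeq⟩ => ?_⟩, fun k _ => hchild k⟩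
  · obtain ⟨⟨hHns, rfl, hHe⟩, -⟩ := hHcl
    have hfin : (msg H).Finite := Set.finite_of_ncard_ne_zero (by rw [← edim]; omega)
    obtain ⟨g, hg, hgm, hlt, hnot, hHmsg⟩ :=
      exists_msg_eq_of_child hHns hfin (hP.1.2.2.trans hHe.symm) hHchild
    obtain ⟨k, rfl⟩ := hmsg ▸ hg
    exact ⟨k, (hk0 k).2 hgm, (hlast _).1 hlt, hnot, by rw [← hHmsg, genSet_msg hHns]⟩
  · subst hHeq
    have hkP : n k ∈ msg P := hmsg ▸ Set.mem_range_self k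
    rw [hchild k hbig hnot]
    exact ⟨mem_classOf_of_msg_eq hP hH hkP ((hk0 k).1 hk) hnot (hchild k hbig hnot),
      eq_sdiff_sSup_union hkP ((hlast _).2 hbig)⟩
end

section
/- Let n₁, …, n_e and i be positive integers. Set C(2) = {(x₁,…,x_e) ∈ ℕ^e : n₂x₂ + ⋯ + n_e x_e = n₁x₁ + i·1} and C(3) = {(x₁,…,x_e,x_{e+1}) ∈ ℕ^{e+1} : n₂x₂ + ⋯ + n_e x_e = n₁x₁ + i·x_{e+1}}. Suppose A = {α₁,…,α_t} is a generating set of the additive monoid C(3), where α₁,…,α_d are exactly the elements of A whose last coordinate is 0 and α_{d+1},…,α_q are exactly the elements of A whose last coordinate is 1. Then C(2) = {ᾱ_{d+1},…,ᾱ_q} + ⟨ᾱ₁,…,ᾱ_d⟩, where ᾱ_j ∈ ℕ^e is obtained from α_j by deleting the last coordinate and ⟨ᾱ₁,…,ᾱ_d⟩ is the additive submonoid of ℕ^e generated by ᾱ₁,…,ᾱ_d. -/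
/-!
A point x of C(2) lifts to (x, 1) ∈ C(3). Last coordinates add in ℕ, so when (x, 1) is written
as a sum of generators exactly one of them has last coordinate 1 and all others have last
coordinate 0; deleting the last coordinate gives x ∈ {ᾱ_{d+1},…,ᾱ_q} + ⟨ᾱ₁,…,ᾱ_d⟩.
Conversely, such a sum lifts to an element of C(3) with last coordinate 1, i.e. to a point of C(2).
-/

open scoped Pointwise

namespace AddSubmonoid

variable {M : Type*} [AddCommMonoid M] (f : M →+ ℕ) {s : Set M}

theorem mem_closure_inter_preimage_zero {x : M} (hx : x ∈ closure s) (hfx : f x = 0) :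
    x ∈ closure (s ∩ f ⁻¹' {0}) := by
  induction hx using closure_induction with
  | mem y hy => exact subset_closure ⟨hy, hfx⟩
  | zero => exact zero_mem _
  | add y z _ _ ihy ihz =>
    rw [map_add, Nat.add_eq_zero_iff] at hfx
    exact add_mem (ihy hfx.1) (ihz hfx.2)

theorem closure_inter_preimage_one :
    (closure s : Set M) ∩ f ⁻¹' {1} = s ∩ f ⁻¹' {1} + (closure (s ∩ f ⁻¹' {0}) : Set M) := by
  ext x
  constructor
  · rintro ⟨hx, hfx : f x = 1⟩
    induction hx using closure_induction with
    | mem y hy => exact ⟨y, ⟨hy, hfx⟩, 0, zero_mem _, add_zero y⟩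
    | zero => simp at hfx
    | add y z hy hz ihy ihz =>
      rw [map_add, Nat.add_eq_one_iff] at hfx
      rcases hfx with ⟨hfy, hfz⟩ | ⟨hfy, hfz⟩
      · obtain ⟨b, hb, m, hm, rfl⟩ := ihz hfz
        refine ⟨b, hb, y + m, add_mem (mem_closure_inter_preimage_zero f hy hfy) hm, ?_⟩
        exact add_left_comm b y m
      · obtain ⟨b, hb, m, hm, rfl⟩ := ihy hfy
        exact ⟨b, hb, m + z, add_mem hm (mem_closure_inter_preimage_zero f hz hfz),
          (add_assoc b m z).symm⟩
  · rintro ⟨b, ⟨hb, hfb : f b = 1⟩, m, hm, rfl⟩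
    have hfm : f m = 0 := (closure_le (S := AddMonoidHom.mker f)).mpr Set.inter_subset_right hm
    refine ⟨add_mem (subset_closure hb) (closure_mono Set.inter_subset_left hm), ?_⟩
    show f (b + m) = 1
    rw [map_add, hfb, hfm]

end AddSubmonoid

theorem setOf_affine_eq_image_last_eq_one (r n1 i : ℕ) (c : Fin r → ℕ) :
    {x : ℕ × (Fin r → ℕ) | ∑ j, c j * x.2 j = n1 * x.1 + i} =
      (fun x : ℕ × (Fin r → ℕ) × ℕ => (x.1, x.2.1)) ''
        ({x | ∑ j, c j * x.2.1 j = n1 * x.1 + i * x.2.2} ∩ {x | x.2.2 = 1}) := by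
  ext ⟨a, v⟩
  constructor
  · intro h
    exact ⟨(a, v, 1), ⟨by simpa using h, rfl⟩, rfl⟩
  · rintro ⟨⟨a', v', k⟩, ⟨h, hk⟩, he⟩
    simp_all

/-- A point of ℕ^{e+1} is encoded as (x₁, (x₂,…,x_e), x_{e+1}) : ℕ × (Fin r → ℕ) × ℕ with
r = e − 1, and n₂,…,n_e as c : Fin r → ℕ. -/
theorem stmt16_general (r : ℕ) (n1 i : ℕ) (c : Fin r → ℕ)
    (t d q : ℕ)
    (α : Fin t → ℕ × (Fin r → ℕ) × ℕ)
    (hgen : (AddSubmonoid.closure (Set.range α) : Set (ℕ × (Fin r → ℕ) × ℕ)) =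
      {x | ∑ j, c j * x.2.1 j = n1 * x.1 + i * x.2.2})
    (h0 : ∀ k : Fin t, (α k).2.2 = 0 ↔ k.val < d)
    (h1 : ∀ k : Fin t, (α k).2.2 = 1 ↔ (d ≤ k.val ∧ k.val < q)) :
    {x : ℕ × (Fin r → ℕ) | ∑ j, c j * x.2 j = n1 * x.1 + i} =
      ((fun x : ℕ × (Fin r → ℕ) × ℕ => (x.1, x.2.1)) ''
          (α '' {k : Fin t | d ≤ k.val ∧ k.val < q})) +
        (AddSubmonoid.closure ((fun x : ℕ × (Fin r → ℕ) × ℕ => (x.1, x.2.1)) ''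
          (α '' {k : Fin t | k.val < d})) : Set (ℕ × (Fin r → ℕ))) := by
  let π : ℕ × (Fin r → ℕ) × ℕ →+ ℕ × (Fin r → ℕ) :=
    (AddMonoidHom.id ℕ).prodMap (AddMonoidHom.fst _ _)
  let deg : ℕ × (Fin r → ℕ) × ℕ →+ ℕ := (AddMonoidHom.snd _ _).comp (AddMonoidHom.snd _ _)
  have hα1 : α '' {k | d ≤ k.val ∧ k.val < q} = Set.range α ∩ deg ⁻¹' {1} := by
    rw [← Set.image_preimage_eq_range_inter]
    exact congrArg _ (Set.ext fun k => (h1 k).symm)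
  have hα0 : α '' {k | k.val < d} = Set.range α ∩ deg ⁻¹' {0} := by
    rw [← Set.image_preimage_eq_range_inter]
    exact congrArg _ (Set.ext fun k => (h0 k).symm)
  calc _ = π '' ((AddSubmonoid.closure (Set.range α) : Set _) ∩ deg ⁻¹' {1}) := by
        rw [hgen]; exact setOf_affine_eq_image_last_eq_one r n1 i c
    _ = π '' (Set.range α ∩ deg ⁻¹' {1}) +
          (AddSubmonoid.closure (π '' (Set.range α ∩ deg ⁻¹' {0})) : Set _) := by
        rw [AddSubmonoid.closure_inter_preimage_one, Set.image_add, ← AddSubmonoid.coe_map,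
          AddMonoidHom.map_mclosure]
    _ = _ := by rw [hα1, hα0]; rfl

/-- Lemma 25: if A = {α₁,…,α_t} generates the monoid C(3)
(nonnegative solutions of n₂x₂+⋯+n_e x_e = n₁x₁ + i·x_{e+1}), with
α₁,…,α_d exactly the elements with last coordinate 0 and α_{d+1},…,α_q exactly
those with last coordinate 1, then
C(2) = {ᾱ_{d+1},…,ᾱ_q} + ⟨ᾱ₁,…,ᾱ_d⟩, where ᾱ deletes the last coordinate.
Tuples of ℕ^{e+1} are encoded as (x₁, (x₂,…,x_e), x_{e+1}) : ℕ × (Fin r → ℕ) × ℕ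
with r = e − 1 and n₂,…,n_e encoded as c : Fin r → ℕ. -/
theorem stmt16 (r : ℕ) (n1 i : ℕ) (c : Fin r → ℕ)
    (hn1 : 0 < n1) (hc : ∀ j, 0 < c j) (hi : 0 < i)
    (t d q : ℕ) (hdq : d ≤ q) (hqt : q ≤ t)
    (α : Fin t → ℕ × (Fin r → ℕ) × ℕ)
    (hgen : (AddSubmonoid.closure (Set.range α) : Set (ℕ × (Fin r → ℕ) × ℕ)) =
      {x | ∑ j, c j * x.2.1 j = n1 * x.1 + i * x.2.2})
    (h0 : ∀ k : Fin t, (α k).2.2 = 0 ↔ k.val < d)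
    (h1 : ∀ k : Fin t, (α k).2.2 = 1 ↔ (d ≤ k.val ∧ k.val < q)) :
    {x : ℕ × (Fin r → ℕ) | ∑ j, c j * x.2 j = n1 * x.1 + i} =
      ((fun x : ℕ × (Fin r → ℕ) × ℕ => (x.1, x.2.1)) ''
          (α '' {k : Fin t | d ≤ k.val ∧ k.val < q})) +
        (AddSubmonoid.closure ((fun x : ℕ × (Fin r → ℕ) × ℕ => (x.1, x.2.1)) ''
          (α '' {k : Fin t | k.val < d})) : Set (ℕ × (Fin r → ℕ))) :=
  stmt16_general r n1 i c t d q α hgen h0 h1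
end

section
/- Let n₁, …, n_e and i be positive integers with i < n₁. Set C(1) = {(x₂,…,x_e) ∈ ℕ^{e−1} : n₂x₂ + ⋯ + n_e x_e ≡ i (mod n₁)} and C(3) = {(x₁,…,x_e,x_{e+1}) ∈ ℕ^{e+1} : n₂x₂ + ⋯ + n_e x_e = n₁x₁ + i·x_{e+1}}. Suppose A = {α₁,…,α_t} generates the additive monoid C(3), with α_{d+1},…,α_q exactly the elements of A whose last coordinate equals 1. Then the set of minimal elements of C(1), with respect to the componentwise order on ℕ^{e−1}, coincides with the set of minimal elements of the finite set {(α_{k,2},…,α_{k,e}) : k ∈ {d+1,…,q}} obtained by deleting the first and last coordinates of α_{d+1},…,α_q. -/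
open scoped Pointwise

/-!
Since i < n₁, a tuple x lies in C(1) exactly when (m, x, 1) ∈ C(3) for some m. Writing such an
element as a sum of generators, exactly one summand has last coordinate 1, and it lies below the
sum. So every element of C(1) dominates the truncation of some α_k with k ∈ {d+1,…,q}, and all
these truncations lie in C(1); a subset that is coinitial in this sense has the same minimal
elements as the whole set.
-/

theorem minimalsOf_eq_of_subset_of_forall_exists_le {β : Type*} [PartialOrder β]
    {X B : Set β} (hBX : B ⊆ X) (hX : ∀ x ∈ X, ∃ b ∈ B, b ≤ x) :
    minimalsOf X = minimalsOf B := by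
  ext x
  constructor
  · rintro ⟨hxX, hmin⟩
    obtain ⟨b, hbB, hbx⟩ := hX x hxX
    obtain rfl := hmin b (hBX hbB) hbx
    exact ⟨hbB, fun y hyB hyx => hmin y (hBX hyB) hyx⟩
  · rintro ⟨hxB, hmin⟩
    refine ⟨hBX hxB, fun y hyX hyx => ?_⟩
    obtain ⟨b, hbB, hby⟩ := hX y hyX
    obtain rfl := hmin b hbB (hby.trans hyx)
    exact le_antisymm hyx hby

theorem exists_mem_le_of_mem_closure_of_eq_one {M : Type*} [AddCommMonoid M] [PartialOrder M]
    [CanonicallyOrderedAdd M] {s : Set M} (f : M →+ ℕ) {z : M}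
    (hz : z ∈ AddSubmonoid.closure s) (hfz : f z = 1) : ∃ a ∈ s, f a = 1 ∧ a ≤ z := by
  induction hz using AddSubmonoid.closure_induction with
  | mem a ha => exact ⟨a, ha, hfz, le_rfl⟩
  | zero => simp at hfz
  | add a b _ _ iha ihb =>
    rw [map_add] at hfz
    rcases Nat.add_eq_one_iff.mp hfz with ⟨-, hb⟩ | ⟨ha, -⟩
    · obtain ⟨g, hg, hfg, hgb⟩ := ihb hb
      exact ⟨g, hg, hfg, hgb.trans le_add_self⟩
    · obtain ⟨g, hg, hfg, hga⟩ := iha ha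
      exact ⟨g, hg, hfg, hga.trans le_self_add⟩

theorem Nat.mod_eq_mod_iff_exists_eq_mul_add {s n i : ℕ} (hin : i < n) :
    s % n = i % n ↔ ∃ m, s = n * m + i := by
  rw [Nat.mod_eq_of_lt hin, Nat.mod_eq_iff]
  simp [hin, (Nat.zero_lt_of_lt hin).ne']

/-- Tuples of ℕ^{e+1} are encoded as (x₁, (x₂,…,x_e), x_{e+1}) : ℕ × (Fin r → ℕ) × ℕ with
r = e − 1, and n₂,…,n_e as c : Fin r → ℕ. -/
theorem stmt17_general (r : ℕ) (n1 i : ℕ) (c : Fin r → ℕ)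
    (hin1 : i < n1)
    (t d q : ℕ)
    (α : Fin t → ℕ × (Fin r → ℕ) × ℕ)
    (hgen : (AddSubmonoid.closure (Set.range α) : Set (ℕ × (Fin r → ℕ) × ℕ)) =
      {x | ∑ j, c j * x.2.1 j = n1 * x.1 + i * x.2.2})
    (h1 : ∀ k : Fin t, (α k).2.2 = 1 ↔ (d ≤ k.val ∧ k.val < q)) :
    minimalsOf {x : Fin r → ℕ | (∑ j, c j * x j) % n1 = i % n1} =
      minimalsOf ((fun x : ℕ × (Fin r → ℕ) × ℕ => x.2.1) ''
        (α '' {k : Fin t | d ≤ k.val ∧ k.val < q})) := by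
  have hC3 : ∀ z, z ∈ AddSubmonoid.closure (Set.range α) ↔
      ∑ j, c j * z.2.1 j = n1 * z.1 + i * z.2.2 := fun z => Set.ext_iff.mp hgen z
  refine minimalsOf_eq_of_subset_of_forall_exists_le ?_ ?_
  · rintro _ ⟨_, ⟨k, hk, rfl⟩, rfl⟩
    have hsum := (hC3 (α k)).mp (AddSubmonoid.subset_closure ⟨k, rfl⟩)
    rw [(h1 k).mpr hk, mul_one] at hsum
    exact (Nat.mod_eq_mod_iff_exists_eq_mul_add hin1).mpr ⟨_, hsum⟩
  · intro x hx
    obtain ⟨m, hm⟩ := (Nat.mod_eq_mod_iff_exists_eq_mul_add hin1).mp hx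
    have hz : (m, x, 1) ∈ AddSubmonoid.closure (Set.range α) := by
      rw [hC3, mul_one]
      exact hm
    obtain ⟨_, ⟨k, rfl⟩, hk, hle⟩ :=
      exists_mem_le_of_mem_closure_of_eq_one
        ((AddMonoidHom.snd (Fin r → ℕ) ℕ).comp (AddMonoidHom.snd ℕ _)) hz rfl
    exact ⟨_, ⟨α k, ⟨k, (h1 k).mp hk, rfl⟩, rfl⟩, hle.2.1⟩

/-- Proposition 26: with i < n₁ and A = {α₁,…,α_t} a generating
set of C(3) whose elements with last coordinate 1 are exactly α_{d+1},…,α_q,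
the minimal elements (componentwise order) of
C(1) = {(x₂,…,x_e) ∈ ℕ^{e−1} : n₂x₂+⋯+n_e x_e ≡ i (mod n₁)} coincide with the
minimal elements of {(α_{k,2},…,α_{k,e}) : d+1 ≤ k ≤ q} (first and last
coordinates deleted). Tuples of ℕ^{e+1} are encoded as
(x₁, (x₂,…,x_e), x_{e+1}) : ℕ × (Fin r → ℕ) × ℕ with r = e − 1 and
n₂,…,n_e encoded as c : Fin r → ℕ. -/
theorem stmt17 (r : ℕ) (n1 i : ℕ) (c : Fin r → ℕ)
    (hn1 : 0 < n1) (hc : ∀ j, 0 < c j) (hi : 0 < i) (hin1 : i < n1)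
    (t d q : ℕ) (hdq : d ≤ q) (hqt : q ≤ t)
    (α : Fin t → ℕ × (Fin r → ℕ) × ℕ)
    (hgen : (AddSubmonoid.closure (Set.range α) : Set (ℕ × (Fin r → ℕ) × ℕ)) =
      {x | ∑ j, c j * x.2.1 j = n1 * x.1 + i * x.2.2})
    (h1 : ∀ k : Fin t, (α k).2.2 = 1 ↔ (d ≤ k.val ∧ k.val < q)) :
    minimalsOf {x : Fin r → ℕ | (∑ j, c j * x j) % n1 = i % n1} =
      minimalsOf ((fun x : ℕ × (Fin r → ℕ) × ℕ => x.2.1) ''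
        (α '' {k : Fin t | d ≤ k.val ∧ k.val < q})) :=
  stmt17_general r n1 i c hin1 t d q α hgen h1
end
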